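/- Let n ≥ 1 and let μ_1, …, μ_n be real numbers with −1 < μ_k < 1 for every k. Fix a > −1/2, set μ_{k,a} = μ_k + a(1+μ_k), A_a(x) = −∫_{−1/(1+2a)}^{x} s·∏_{k=1}^{n}(1 + μ_{k,a}·s) ds, and assume A_a(1) = 0. Let B_a(x) = ∫_{0}^{x} (∏_{k=1}^{n}(1 + μ_{k,a}·s))/A_a(s) ds, and suppose x_a : ℝ → (−1/(1+2a), 1) satisfies B_a(x_a(ρ)) = ρ for all ρ ∈ ℝ. Define u_a(ρ) := −log A_a(x_a(ρ)). Then u_a is twice differentiable on ℝ, u_a′(ρ) = x_a(ρ) for all ρ, and u_a satisfies the ordinary differential equation u_a″(ρ)·∏_{k=1}^{n}(1 + μ_{k,a}·u_a′(ρ)) = e^{−u_a(ρ)} for all ρ ∈ ℝ. -/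

import Mathlib

open Real MeasureTheory Filter Set

/-- `A_a(x) = -∫_{-1/(1+2a)}^{x} s ∏ₖ (1 + μ_{k,a} s) ds`. -/
noncomputable def sasakiA {n : ℕ} (μ : Fin n → ℝ) (a x : ℝ) : ℝ :=
  -∫ s in (-1/(1+2*a))..x, s * ∏ k, (1 + (μ k + a * (1 + μ k)) * s)

/-- `B_a(x) = ∫₀ˣ (∏ₖ (1 + μ_{k,a} s)) / A_a(s) ds`. -/
noncomputable def sasakiB {n : ℕ} (μ : Fin n → ℝ) (a x : ℝ) : ℝ :=
  ∫ s in (0:ℝ)..x, (∏ k, (1 + (μ k + a * (1 + μ k)) * s)) / sasakiA μ a s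

section SasakiAux

variable {n : ℕ} {μ : Fin n → ℝ} {a : ℝ}

lemma sasaki_L_neg (ha : -1/2 < a) : -1/(1+2*a) < 0 :=
  div_neg_of_neg_of_pos (by norm_num) (by linarith)

lemma sasaki_prod_pos (ha : -1/2 < a) (hμ : ∀ k, -1 < μ k ∧ μ k < 1)
    {s : ℝ} (hs : s ∈ Icc (-1/(1+2*a)) 1) :
    0 < ∏ k, (1 + (μ k + a * (1 + μ k)) * s) := by
  apply Finset.prod_pos
  intro k _
  have h2a : (0:ℝ) < 1 + 2*a := by linarith
  have hk1 := (hμ k).1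
  have hk2 := (hμ k).2
  have hL : 0 < 1 + (μ k + a * (1 + μ k)) * (-1/(1+2*a)) := by
    have key : 1 + (μ k + a * (1 + μ k)) * (-1/(1+2*a)) = ((1+a)*(1 - μ k))/(1+2*a) := by
      rw [eq_div_iff h2a.ne']
      have hc : (-1/(1+2*a))*(1+2*a) = -1 := div_mul_cancel₀ _ h2a.ne'
      linear_combination (μ k + a * (1 + μ k)) * hc
    rw [key]
    exact div_pos (mul_pos (by linarith) (by linarith)) h2a
  have h1 : 0 < 1 + (μ k + a * (1 + μ k)) * 1 := by nlinarith
  rcases le_or_gt 0 (μ k + a * (1 + μ k)) with hc | hc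
  · have := mul_le_mul_of_nonneg_left hs.1 hc
    linarith
  · have := mul_le_mul_of_nonpos_left hs.2 hc.le
    linarith

lemma sasaki_integrand_continuous :
    Continuous fun s : ℝ => s * ∏ k, (1 + (μ k + a * (1 + μ k)) * s) := by
  fun_prop

lemma sasaki_hasDerivAt_A (x : ℝ) :
    HasDerivAt (sasakiA μ a) (-(x * ∏ k, (1 + (μ k + a * (1 + μ k)) * x))) x := by
  have hc := sasaki_integrand_continuous (μ := μ) (a := a)
  have h := intervalIntegral.integral_hasStrictDerivAt_right (a := -1/(1+2*a)) (b := x)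
    (hc.intervalIntegrable _ _) (hc.stronglyMeasurableAtFilter _ _) hc.continuousAt
  exact h.hasDerivAt.neg

lemma sasaki_A_continuous : Continuous (sasakiA μ a) :=
  continuous_iff_continuousAt.2 fun x => (sasaki_hasDerivAt_A x).continuousAt

lemma sasaki_A_pos (ha : -1/2 < a) (hμ : ∀ k, -1 < μ k ∧ μ k < 1)
    (hA1 : sasakiA μ a 1 = 0) {x : ℝ} (hx : x ∈ Ioo (-1/(1+2*a)) 1) :
    0 < sasakiA μ a x := by
  set L := -1/(1+2*a) with hLdef
  have hL0 : L < 0 := sasaki_L_neg ha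
  have hc := sasaki_integrand_continuous (μ := μ) (a := a)
  set g : ℝ → ℝ := fun s : ℝ => s * ∏ k, (1 + (μ k + a * (1 + μ k)) * s) with hgdef
  rcases le_or_gt x 0 with hx0 | hx0
  · have hpos : 0 < ∫ s in L..x, -g s := by
      apply intervalIntegral.intervalIntegral_pos_of_pos_on
        (hc.neg.intervalIntegrable _ _) _ hx.1
      intro s hs
      have hsI : s ∈ Icc L 1 := ⟨hs.1.le, by linarith [hs.2, hx.2]⟩
      have hP := sasaki_prod_pos ha hμ hsI
      have hsneg : s < 0 := lt_of_lt_of_le hs.2 hx0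
      simpa [hgdef, neg_mul] using mul_pos (neg_pos.2 hsneg) hP
    rw [intervalIntegral.integral_neg] at hpos
    exact hpos
  · have hi1 : IntervalIntegrable g volume L x := hc.intervalIntegrable _ _
    have hi2 : IntervalIntegrable g volume x 1 := hc.intervalIntegrable _ _
    have hsplit := intervalIntegral.integral_add_adjacent_intervals hi1 hi2
    have hA1' : (∫ s in L..(1:ℝ), g s) = 0 := by
      have : sasakiA μ a 1 = -∫ s in L..(1:ℝ), g s := rfl
      rw [this] at hA1
      linarith
    have hpos : 0 < ∫ s in x..(1:ℝ), g s := by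
      apply intervalIntegral.intervalIntegral_pos_of_pos_on hi2 _ hx.2
      intro s hs
      have hsI : s ∈ Icc L 1 := ⟨by linarith [hs.1, hx.1], hs.2.le⟩
      exact mul_pos (lt_trans hx0 hs.1) (sasaki_prod_pos ha hμ hsI)
    have : sasakiA μ a x = -∫ s in L..x, g s := rfl
    rw [this]
    linarith [hsplit, hA1', hpos]

lemma sasaki_f_contOn (ha : -1/2 < a) (hμ : ∀ k, -1 < μ k ∧ μ k < 1)
    (hA1 : sasakiA μ a 1 = 0) :
    ContinuousOn (fun s => (∏ k, (1 + (μ k + a * (1 + μ k)) * s)) / sasakiA μ a s)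
      (Ioo (-1/(1+2*a)) 1) := by
  apply ContinuousOn.div
  · fun_prop
  · exact sasaki_A_continuous.continuousOn
  · exact fun s hs => (sasaki_A_pos ha hμ hA1 hs).ne'

lemma sasaki_zero_mem (ha : -1/2 < a) : (0:ℝ) ∈ Ioo (-1/(1+2*a)) 1 :=
  ⟨sasaki_L_neg ha, one_pos⟩

lemma sasaki_hasDerivAt_B (ha : -1/2 < a) (hμ : ∀ k, -1 < μ k ∧ μ k < 1)
    (hA1 : sasakiA μ a 1 = 0) {x : ℝ} (hx : x ∈ Ioo (-1/(1+2*a)) 1) :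
    HasDerivAt (sasakiB μ a)
      ((∏ k, (1 + (μ k + a * (1 + μ k)) * x)) / sasakiA μ a x) x := by
  have hcont := sasaki_f_contOn ha hμ hA1
  have hsub : uIcc (0:ℝ) x ⊆ Ioo (-1/(1+2*a)) 1 :=
    (ordConnected_Ioo).uIcc_subset (sasaki_zero_mem ha) hx
  exact ((intervalIntegral.integral_hasStrictDerivAt_right
    ((hcont.mono hsub).intervalIntegrable)
    (hcont.stronglyMeasurableAtFilter isOpen_Ioo x hx)
    (hcont.continuousAt (isOpen_Ioo.mem_nhds hx)))).hasDerivAt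

lemma sasaki_B_strictMono (ha : -1/2 < a) (hμ : ∀ k, -1 < μ k ∧ μ k < 1)
    (hA1 : sasakiA μ a 1 = 0) {x y : ℝ} (hx : x ∈ Ioo (-1/(1+2*a)) 1)
    (hy : y ∈ Ioo (-1/(1+2*a)) 1) (hxy : x < y) :
    sasakiB μ a x < sasakiB μ a y := by
  have hcont := sasaki_f_contOn ha hμ hA1
  have h0 := sasaki_zero_mem ha
  have hsub1 : uIcc (0:ℝ) x ⊆ Ioo (-1/(1+2*a)) 1 := (ordConnected_Ioo).uIcc_subset h0 hx
  have hsub2 : uIcc x y ⊆ Ioo (-1/(1+2*a)) 1 := (ordConnected_Ioo).uIcc_subset hx hy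
  have hi1 : IntervalIntegrable
      (fun s => (∏ k, (1 + (μ k + a * (1 + μ k)) * s)) / sasakiA μ a s) volume 0 x :=
    (hcont.mono hsub1).intervalIntegrable
  have hi2 : IntervalIntegrable
      (fun s => (∏ k, (1 + (μ k + a * (1 + μ k)) * s)) / sasakiA μ a s) volume x y :=
    (hcont.mono hsub2).intervalIntegrable
  have hsplit := intervalIntegral.integral_add_adjacent_intervals hi1 hi2
  have hpos : 0 < ∫ s in x..y,
      (∏ k, (1 + (μ k + a * (1 + μ k)) * s)) / sasakiA μ a s := by
    apply intervalIntegral.intervalIntegral_pos_of_pos_on hi2 _ hxy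
    intro s hs
    have hsI : s ∈ Ioo (-1/(1+2*a)) 1 := ⟨lt_trans hx.1 hs.1, lt_trans hs.2 hy.2⟩
    exact div_pos (sasaki_prod_pos ha hμ (Ioo_subset_Icc_self hsI))
      (sasaki_A_pos ha hμ hA1 hsI)
  have h1 : sasakiB μ a x + (∫ s in x..y,
      (∏ k, (1 + (μ k + a * (1 + μ k)) * s)) / sasakiA μ a s) = sasakiB μ a y := hsplit
  linarith

end SasakiAux

theorem u_satisfies_ODE (n : ℕ) (hn : 1 ≤ n) (μ : Fin n → ℝ)
    (hμ : ∀ k, -1 < μ k ∧ μ k < 1) (a : ℝ) (ha : -1/2 < a)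
    (hA1 : sasakiA μ a 1 = 0)
    (xa : ℝ → ℝ) (hxa : ∀ ρ : ℝ, xa ρ ∈ Set.Ioo (-1/(1+2*a)) (1 : ℝ))
    (hBxa : ∀ ρ : ℝ, sasakiB μ a (xa ρ) = ρ) :
    (∀ ρ : ℝ, HasDerivAt (fun σ : ℝ => -Real.log (sasakiA μ a (xa σ))) (xa ρ) ρ) ∧
    (∀ ρ : ℝ, DifferentiableAt ℝ
        (deriv (fun σ : ℝ => -Real.log (sasakiA μ a (xa σ)))) ρ) ∧
    (∀ ρ : ℝ,
      deriv (deriv (fun σ : ℝ => -Real.log (sasakiA μ a (xa σ)))) ρ *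
          ∏ k, (1 + (μ k + a * (1 + μ k)) *
            deriv (fun σ : ℝ => -Real.log (sasakiA μ a (xa σ))) ρ)
        = Real.exp (-(-Real.log (sasakiA μ a (xa ρ))))) := by
  -- B monotone on the interval
  have hBmono : ∀ {x y : ℝ}, x ∈ Ioo (-1/(1+2*a)) 1 → y ∈ Ioo (-1/(1+2*a)) 1 →
      x ≤ y → sasakiB μ a x ≤ sasakiB μ a y := by
    intro x y hx hy hxy
    rcases eq_or_lt_of_le hxy with h | h
    · rw [h]
    · exact (sasaki_B_strictMono ha hμ hA1 hx hy h).le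
  -- continuity of xa
  have hxacont : ∀ ρ : ℝ, ContinuousAt xa ρ := by
    intro ρ
    rw [Metric.continuousAt_iff]
    intro ε hε
    set x := xa ρ with hxdef
    have hx := hxa ρ
    set ε' : ℝ := min ε (min ((x - (-1/(1+2*a)))/2) ((1 - x)/2)) with hε'def
    have hε'pos : 0 < ε' := by
      apply lt_min hε
      apply lt_min <;> [skip; skip] <;> linarith [hx.1, hx.2]
    have hε'ε : ε' ≤ ε := min_le_left _ _
    have hm : x - ε' ∈ Ioo (-1/(1+2*a)) 1 := by
      constructor
      · have : ε' ≤ (x - (-1/(1+2*a)))/2 := le_trans (min_le_right _ _) (min_le_left _ _)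
        linarith [hx.1]
      · linarith [hx.2]
    have hp : x + ε' ∈ Ioo (-1/(1+2*a)) 1 := by
      constructor
      · linarith [hx.1]
      · have : ε' ≤ (1 - x)/2 := le_trans (min_le_right _ _) (min_le_right _ _)
        linarith [hx.2]
    have hBm : sasakiB μ a (x - ε') < ρ := by
      rw [← hBxa ρ]
      exact sasaki_B_strictMono ha hμ hA1 hm hx (by linarith)
    have hBp : ρ < sasakiB μ a (x + ε') := by
      rw [← hBxa ρ]
      exact sasaki_B_strictMono ha hμ hA1 hx hp (by linarith)
    refine ⟨min (ρ - sasakiB μ a (x - ε')) (sasakiB μ a (x + ε') - ρ),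
      lt_min (by linarith) (by linarith), ?_⟩
    intro σ hσ
    rw [Real.dist_eq, abs_lt] at hσ ⊢
    have hσ1 : sasakiB μ a (x - ε') < σ := by
      have := hσ.1
      have h2 := min_le_left (ρ - sasakiB μ a (x - ε')) (sasakiB μ a (x + ε') - ρ)
      linarith
    have hσ2 : σ < sasakiB μ a (x + ε') := by
      have := hσ.2
      have h2 := min_le_right (ρ - sasakiB μ a (x - ε')) (sasakiB μ a (x + ε') - ρ)
      linarith
    have hxσ := hxa σ
    constructor
    · by_contra h
      push_neg at h
      have : xa σ ≤ x - ε' := by linarith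
      have := hBmono hxσ hm this
      rw [hBxa σ] at this
      linarith
    · by_contra h
      push_neg at h
      have : x + ε' ≤ xa σ := by linarith
      have := hBmono hp hxσ this
      rw [hBxa σ] at this
      linarith
  -- main derivative computation
  have key : ∀ ρ : ℝ,
      HasDerivAt (fun σ : ℝ => -Real.log (sasakiA μ a (xa σ))) (xa ρ) ρ ∧
      HasDerivAt xa (sasakiA μ a (xa ρ) /
        (∏ k, (1 + (μ k + a * (1 + μ k)) * xa ρ))) ρ := by
    intro ρ
    have hx := hxa ρ
    have hAx : 0 < sasakiA μ a (xa ρ) := sasaki_A_pos ha hμ hA1 hx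
    have hPx : 0 < ∏ k, (1 + (μ k + a * (1 + μ k)) * xa ρ) :=
      sasaki_prod_pos ha hμ (Ioo_subset_Icc_self hx)
    have hB' := sasaki_hasDerivAt_B ha hμ hA1 hx
    have hne : (∏ k, (1 + (μ k + a * (1 + μ k)) * xa ρ)) / sasakiA μ a (xa ρ) ≠ 0 :=
      (div_pos hPx hAx).ne'
    have hx' := HasDerivAt.of_local_left_inverse (hxacont ρ) hB' hne
      (Eventually.of_forall hBxa)
    rw [inv_div] at hx'
    have hA' := sasaki_hasDerivAt_A (μ := μ) (a := a) (xa ρ)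
    have hAcomp := hA'.comp ρ hx'
    have hlog := (Real.hasDerivAt_log hAx.ne').comp ρ hAcomp
    refine ⟨?_, hx'⟩
    have := hlog.neg
    refine HasDerivAt.congr_deriv this ?_
    field_simp
    have hPe : ∏ x, (1 + xa ρ * (μ x + a * (1 + μ x))) = ∏ k, (1 + (μ k + a * (1 + μ k)) * xa ρ) :=
      Finset.prod_congr rfl fun k _ => by ring
    rw [hPe]
    exact mul_div_cancel_right₀ _ hPx.ne'
  have hud : deriv (fun σ : ℝ => -Real.log (sasakiA μ a (xa σ))) = xa :=
    funext fun ρ => (key ρ).1.deriv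
  refine ⟨fun ρ => (key ρ).1, ?_, ?_⟩
  · intro ρ
    rw [hud]
    exact (key ρ).2.differentiableAt
  · intro ρ
    have hx := hxa ρ
    have hAx : 0 < sasakiA μ a (xa ρ) := sasaki_A_pos ha hμ hA1 hx
    have hPx : 0 < ∏ k, (1 + (μ k + a * (1 + μ k)) * xa ρ) :=
      sasaki_prod_pos ha hμ (Ioo_subset_Icc_self hx)
    rw [hud, (key ρ).2.deriv, neg_neg, Real.exp_log hAx,
      div_mul_cancel₀ _ hPx.ne']
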